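/- arXiv:2307.00265 — 3 statements merged into one kernel-verified Lean document; each statement's English description precedes it below -/
import Mathlib

section
/- Fix N ≥ 1 and let θ₁, …, θ_N be mutually independent real-valued random variables on a probability space, each uniformly distributed on [−π/2, π/2]. Define the random vector ṽ ∈ ℂ^{N+1} by ṽ_n = exp(−iθ_n) for n = 1, …, N and ṽ_{N+1} = 1. Then the entrywise expectation of the outer product ṽ ṽ^H equals the matrix Z; that is, for all m, n ∈ {1, …, N+1}, E[ṽ_m · conj(ṽ_n)] = Z_{m,n}. -/
/-!
Every entry of `ṽ` has modulus one, which gives the diagonal. Off the diagonal, independence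
factors the expectation as `E[ṽ_m] · conj E[ṽ_n]`, and for `θ` uniform on `[-π/2, π/2]`,
`E[exp(-iθ)] = (1/π) ∫_{-π/2}^{π/2} exp(-ix) dx = 2/π` is real; the last entry of `ṽ` is `1`.
-/

open MeasureTheory Real ProbabilityTheory

lemma integral_comp_eq_smul_intervalIntegral_of_map_eq {Ω E : Type*} [MeasurableSpace Ω]
    [NormedAddCommGroup E] [NormedSpace ℝ E] {μ : Measure Ω} {X : Ω → ℝ} (hX : AEMeasurable X μ)
    {a b c : ℝ} (hab : a ≤ b) (hc : 0 ≤ c)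
    (hlaw : μ.map X = ENNReal.ofReal c • volume.restrict (Set.Icc a b)) {f : ℝ → E}
    (hf : AEStronglyMeasurable f (μ.map X)) :
    ∫ ω, f (X ω) ∂μ = c • ∫ x in a..b, f x := by
  rw [← integral_map hX hf, hlaw, integral_smul_measure, ENNReal.toReal_ofReal hc,
    integral_Icc_eq_integral_Ioc, intervalIntegral.integral_of_le hab]

namespace Complex

lemma integral_exp_neg_I_mul_pi_div_two :
    ∫ x in -(π / 2)..π / 2, exp (-(I * x)) = 2 := by
  have hI : -I ≠ 0 := neg_ne_zero.mpr I_ne_zero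
  have upper : -I * ((π / 2 : ℝ) : ℂ) = -π / 2 * I := by push_cast; ring
  have lower : -I * ((-(π / 2) : ℝ) : ℂ) = π / 2 * I := by push_cast; ring
  simp_rw [← neg_mul]
  rw [integral_exp_mul_complex hI, upper, lower, exp_pi_div_two_mul_I,
    exp_neg_pi_div_two_mul_I, div_eq_iff hI]
  ring

lemma integral_exp_neg_I_mul_of_map_eq_uniform {Ω : Type*} [MeasurableSpace Ω] {μ : Measure Ω}
    {X : Ω → ℝ} (hX : AEMeasurable X μ)
    (hlaw : μ.map X = ENNReal.ofReal (1 / π) • volume.restrict (Set.Icc (-(π / 2)) (π / 2))) :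
    ∫ ω, exp (-(I * X ω)) ∂μ = ((2 / π : ℝ) : ℂ) := by
  have hcont : Continuous fun x : ℝ => exp (-(I * x)) := by fun_prop
  rw [integral_comp_eq_smul_intervalIntegral_of_map_eq hX (by linarith [pi_pos])
    (by positivity) hlaw hcont.aestronglyMeasurable, integral_exp_neg_I_mul_pi_div_two, real_smul]
  push_cast
  ring

end Complex

open Complex ComplexConjugate

theorem expectation_outer_product_eq_Z_general {Ω : Type*} [MeasurableSpace Ω]
    {μ : Measure Ω} [IsProbabilityMeasure μ]
    (N : ℕ)
    (θ : Fin N → Ω → ℝ) (hθ : ∀ n, Measurable (θ n))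
    (hindep : iIndepFun (m := fun _ => Real.measurableSpace) θ μ)
    (hlaw : ∀ n, Measure.map (θ n) μ
      = ENNReal.ofReal (1 / π) • volume.restrict (Set.Icc (-(π / 2)) (π / 2)))
    (vt : Ω → Fin (N + 1) → ℂ)
    (hvt : ∀ ω (n : Fin (N + 1)), vt ω n
      = if h : (n : ℕ) < N then Complex.exp (-(Complex.I * (θ ⟨n, h⟩ ω : ℂ))) else 1)
    (Z : Matrix (Fin (N + 1)) (Fin (N + 1)) ℂ)
    (hZ : ∀ m n, Z m n = if m = n then 1
      else if (m : ℕ) < N ∧ (n : ℕ) < N then ((4 / π ^ 2 : ℝ) : ℂ) else ((2 / π : ℝ) : ℂ)) :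
    ∀ m n : Fin (N + 1),
      (∫ ω, vt ω m * (starRingEnd ℂ) (vt ω n) ∂μ) = Z m n := by
  have hmean (k : Fin N) : ∫ ω, exp (-(I * θ k ω)) ∂μ = ((2 / π : ℝ) : ℂ) :=
    integral_exp_neg_I_mul_of_map_eq_uniform (hθ k).aemeasurable (hlaw k)
  have hmean_conj (k : Fin N) : ∫ ω, conj (exp (-(I * θ k ω))) ∂μ = ((2 / π : ℝ) : ℂ) := by
    rw [integral_conj, hmean, conj_ofReal]
  have hunit (ω : Ω) (n : Fin (N + 1)) : ‖vt ω n‖ = 1 := by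
    rw [hvt]; split_ifs <;> simp [norm_exp]
  intro m n
  rw [hZ]
  split_ifs with hmn hlt
  · simp [hmn, mul_conj', hunit]
  · obtain ⟨hm, hn⟩ := hlt
    have hne : (⟨m, hm⟩ : Fin N) ≠ ⟨n, hn⟩ := fun h => hmn (Fin.ext (Fin.mk.inj_iff.mp h))
    simp only [hvt, dif_pos hm, dif_pos hn]
    rw [(hindep.indepFun hne).integral_fun_comp_mul_comp (f := fun x : ℝ => exp (-(I * x)))
      (g := fun x : ℝ => conj (exp (-(I * x)))) (hθ _).aemeasurable (hθ _).aemeasurable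
      (by fun_prop : Continuous _).aestronglyMeasurable
      (by fun_prop : Continuous _).aestronglyMeasurable, hmean, hmean_conj]
    push_cast
    ring
  · rcases lt_or_ge (m : ℕ) N with hm | hm
    · simp [hvt, hm, show ¬ (n : ℕ) < N by omega, hmean]
    · simpa [hvt, show ¬ (m : ℕ) < N by omega, show (n : ℕ) < N by omega] using hmean_conj _

/-- Theorem 1 (core identity): if `θ₁, …, θ_N` are i.i.d. uniform on `[-π/2, π/2]`
and `ṽ ∈ ℂ^{N+1}` is given by `ṽ_n = exp(-i θ_n)` for `n ≤ N`, `ṽ_{N+1} = 1`,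
then `E[ṽ ṽᴴ] = Z` entrywise. -/
theorem expectation_outer_product_eq_Z {Ω : Type*} [MeasurableSpace Ω]
    {μ : Measure Ω} [IsProbabilityMeasure μ]
    (N : ℕ) (hN : 1 ≤ N)
    (θ : Fin N → Ω → ℝ) (hθ : ∀ n, Measurable (θ n))
    (hindep : iIndepFun (m := fun _ => Real.measurableSpace) θ μ)
    (hlaw : ∀ n, Measure.map (θ n) μ
      = ENNReal.ofReal (1 / π) • volume.restrict (Set.Icc (-(π / 2)) (π / 2)))
    (vt : Ω → Fin (N + 1) → ℂ)
    (hvt : ∀ ω (n : Fin (N + 1)), vt ω n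
      = if h : (n : ℕ) < N then Complex.exp (-(Complex.I * (θ ⟨n, h⟩ ω : ℂ))) else 1)
    (Z : Matrix (Fin (N + 1)) (Fin (N + 1)) ℂ)
    (hZ : ∀ m n, Z m n = if m = n then 1
      else if (m : ℕ) < N ∧ (n : ℕ) < N then ((4 / π ^ 2 : ℝ) : ℂ) else ((2 / π : ℝ) : ℂ)) :
    ∀ m n : Fin (N + 1),
      (∫ ω, vt ω m * (starRingEnd ℂ) (vt ω n) ∂μ) = Z m n :=
  expectation_outer_product_eq_Z_general N θ hθ hindep hlaw vt hvt Z hZ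
end

section
/- Fix N ≥ 1, M ≥ 1, K ≥ 0, L ≥ 1. On a probability space, let θ_{ℓ,n} (ℓ = 1, …, L, n = 1, …, N) be mutually independent real-valued random variables, each uniformly distributed on [−π/2, π/2]; define random vectors ṽ_ℓ ∈ ℂ^{N+1} by (ṽ_ℓ)_n = exp(−iθ_{ℓ,n}) for n ≤ N and (ṽ_ℓ)_{N+1} = 1. Let G ∈ ℂ^{(N+1)×M}, v_ℓ ∈ ℂ^{N+1}, τ_ℓ ∈ ℝ, a_{k,ℓ} ∈ ℝ, w_{k,ℓ} ∈ ℂ^M, and W_{E,ℓ} ∈ ℂ^{M×M} be deterministic, with each W_{E,ℓ} Hermitian. Then E[ Σ_ℓ τ_ℓ ( Σ_k a_{k,ℓ} |(v_ℓ ⊙ ṽ_ℓ)^H G w_{k,ℓ}|² + tr( G^H (v_ℓ ⊙ ṽ_ℓ)(v_ℓ ⊙ ṽ_ℓ)^H G W_{E,ℓ} ) ) ] = Σ_ℓ τ_ℓ ( Σ_k a_{k,ℓ} · w_{k,ℓ}^H Y_ℓ w_{k,ℓ} + tr( Y_ℓ W_{E,ℓ} ) ), where Y_ℓ = G^H diag(v_ℓ)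 Z diag(conj(v_ℓ)) G (an M×M Hermitian matrix, so w^H Y_ℓ w is a real number). -/
open MeasureTheory Real ProbabilityTheory Matrix
open ComplexConjugate

/-!
Writing `R_ℓ = (v_ℓ ⊙ ṽ_ℓ)(v_ℓ ⊙ ṽ_ℓ)ᴴ = diag(v_ℓ) ṽ_ℓ ṽ_ℓᴴ diag(conj v_ℓ)`, each summand is a
linear functional of the random matrix `R_ℓ`, and expectation commutes with linear functionals
of a matrix. So it suffices that `E[ṽ_ℓ ṽ_ℓᴴ] = Z`: the diagonal entries are `|e^{-iθ}|² = 1`,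
and an off-diagonal entry factors by independence into a product of the means
`E[e^{-iθ}] = (1/π) ∫_{-π/2}^{π/2} e^{-ix} dx = 2/π` and `1` (the constant last entry).
-/

noncomputable def phaseVector {N : ℕ} (t : Fin N → ℝ) (n : Fin (N + 1)) : ℂ :=
  if h : (n : ℕ) < N then Complex.exp (-(Complex.I * (t ⟨n, h⟩ : ℂ))) else 1

noncomputable def uniformPhaseLaw : Measure ℝ :=
  ENNReal.ofReal (1 / π) • volume.restrict (Set.Icc (-(π / 2)) (π / 2))

lemma integral_exp_neg_I_mul_uniformPhaseLaw :
    ∫ x : ℝ, Complex.exp (-(Complex.I * x)) ∂uniformPhaseLaw = ((2 / π : ℝ) : ℂ) := by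
  rw [uniformPhaseLaw, integral_smul_measure, ENNReal.toReal_ofReal (by positivity),
    integral_Icc_eq_integral_Ioc, ← intervalIntegral.integral_of_le (by linarith [pi_pos])]
  simp_rw [← neg_mul]
  rw [integral_exp_mul_complex (neg_ne_zero.2 Complex.I_ne_zero)]
  have h₁ : -Complex.I * ↑(π / 2) = -π / 2 * Complex.I := by push_cast; ring
  have h₂ : -Complex.I * ↑(-(π / 2)) = π / 2 * Complex.I := by push_cast; ring
  rw [h₁, h₂, Complex.exp_neg_pi_div_two_mul_I, Complex.exp_pi_div_two_mul_I,
    show (-Complex.I - Complex.I) / -Complex.I = 2 by field_simp; ring, Complex.real_smul]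
  push_cast
  ring

lemma ProbabilityTheory.IndepFun.integral_mul_conj {Ω : Type*} [MeasurableSpace Ω]
    {μ : Measure Ω} {X Y : Ω → ℂ} (hXY : IndepFun X Y μ)
    (hX : AEStronglyMeasurable X μ) (hY : AEStronglyMeasurable Y μ) :
    ∫ ω, X ω * conj (Y ω) ∂μ = (∫ ω, X ω ∂μ) * conj (∫ ω, Y ω ∂μ) := by
  rw [← integral_conj]
  exact (hXY.comp measurable_id Complex.continuous_conj.measurable).integral_fun_mul_eq_mul_integral
    hX (Complex.continuous_conj.comp_aestronglyMeasurable hY)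

section PhaseVector

variable {N : ℕ}

@[simp]
lemma phaseVector_castSucc (t : Fin N → ℝ) (j : Fin N) :
    phaseVector t j.castSucc = Complex.exp (-(Complex.I * (t j : ℂ))) := by
  simp [phaseVector]

@[simp]
lemma phaseVector_last (t : Fin N → ℝ) : phaseVector t (Fin.last N) = 1 := by
  simp [phaseVector]

lemma norm_phaseVector (t : Fin N → ℝ) (n : Fin (N + 1)) : ‖phaseVector t n‖ = 1 := by
  rcases Fin.eq_castSucc_or_eq_last n with ⟨j, rfl⟩ | rfl
  · simp [Complex.norm_exp]
  · simp

variable {Ω : Type*} [MeasurableSpace Ω] {μ : Measure Ω} {θ : Fin N → Ω → ℝ}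

lemma measurable_phaseVector (hθ : ∀ j, Measurable (θ j)) (n : Fin (N + 1)) :
    Measurable fun ω => phaseVector (θ · ω) n := by
  rcases Fin.eq_castSucc_or_eq_last n with ⟨j, rfl⟩ | rfl
  · simp only [phaseVector_castSucc]
    fun_prop
  · simp only [phaseVector_last]
    exact measurable_const

lemma indepFun_phaseVector [IsProbabilityMeasure μ]
    (hind : Pairwise fun i j => IndepFun (θ i) (θ j) μ) :
    Pairwise fun m n =>
      IndepFun (fun ω => phaseVector (θ · ω) m) (fun ω => phaseVector (θ · ω) n) μ := by
  have hmeas : Measurable fun x : ℝ => Complex.exp (-(Complex.I * x)) := by fun_prop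
  intro m n hmn
  rcases Fin.eq_castSucc_or_eq_last m with ⟨i, rfl⟩ | rfl <;>
    rcases Fin.eq_castSucc_or_eq_last n with ⟨j, rfl⟩ | rfl <;>
    simp only [phaseVector_castSucc, phaseVector_last]
  · exact (hind fun hij => hmn (congrArg _ hij)).comp hmeas hmeas
  · exact indepFun_const_right _ _
  · exact indepFun_const_left _ _
  · exact absurd rfl hmn

lemma integral_phaseVector [IsProbabilityMeasure μ] (hθ : ∀ j, Measurable (θ j))
    (hlaw : ∀ j, μ.map (θ j) = uniformPhaseLaw) (n : Fin (N + 1)) :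
    ∫ ω, phaseVector (θ · ω) n ∂μ = if (n : ℕ) < N then ((2 / π : ℝ) : ℂ) else 1 := by
  rcases Fin.eq_castSucc_or_eq_last n with ⟨j, rfl⟩ | rfl
  · have hmeas : Measurable fun x : ℝ => Complex.exp (-(Complex.I * x)) := by fun_prop
    simp only [phaseVector_castSucc]
    rw [← integral_map (hθ j).aemeasurable hmeas.aestronglyMeasurable, hlaw,
      integral_exp_neg_I_mul_uniformPhaseLaw]
    simp
  · simp

lemma integral_phaseVector_mul_conj [IsProbabilityMeasure μ] (hθ : ∀ j, Measurable (θ j))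
    (hind : Pairwise fun i j => IndepFun (θ i) (θ j) μ)
    (hlaw : ∀ j, μ.map (θ j) = uniformPhaseLaw) (m n : Fin (N + 1)) :
    ∫ ω, phaseVector (θ · ω) m * conj (phaseVector (θ · ω) n) ∂μ = if m = n then 1
      else if (m : ℕ) < N ∧ (n : ℕ) < N then ((4 / π ^ 2 : ℝ) : ℂ) else ((2 / π : ℝ) : ℂ) := by
  by_cases hmn : m = n
  · subst hmn
    simp [Complex.mul_conj, Complex.normSq_eq_norm_sq, norm_phaseVector]
  have hlt : (m : ℕ) < N ∨ (n : ℕ) < N := by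
    by_contra! h
    exact hmn (Fin.ext (by omega))
  rw [if_neg hmn, (indepFun_phaseVector hind hmn).integral_mul_conj
    (measurable_phaseVector hθ m).aestronglyMeasurable
    (measurable_phaseVector hθ n).aestronglyMeasurable,
    integral_phaseVector hθ hlaw, integral_phaseVector hθ hlaw]
  by_cases hm : (m : ℕ) < N <;> by_cases hn : (n : ℕ) < N <;>
    simp only [hm, hn, if_true, if_false, and_true, and_false, Complex.conj_ofReal,
      map_one, mul_one, one_mul]
  · push_cast; ring
  · tauto

lemma integrable_phaseVector_mul_conj [IsProbabilityMeasure μ] (hθ : ∀ j, Measurable (θ j))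
    (m n : Fin (N + 1)) :
    Integrable (fun ω => phaseVector (θ · ω) m * conj (phaseVector (θ · ω) n)) μ :=
  have hmeas := (measurable_phaseVector hθ m).mul
    (Complex.continuous_conj.measurable.comp (measurable_phaseVector hθ n))
  .of_bound hmeas.aestronglyMeasurable 1 (ae_of_all _ fun ω => by simp [norm_phaseVector])

end PhaseVector

section RandomMatrix

variable {m n : Type*} [Fintype m] [Fintype n] [DecidableEq m] [DecidableEq n]

lemma LinearMap.apply_eq_sum_entry_mul {R : Type*} [Semiring R] (F : Matrix m n R →ₗ[R] R)
    (A : Matrix m n R) : F A = ∑ i, ∑ j, A i j * F (Matrix.single i j 1) := by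
  conv_lhs => rw [matrix_eq_sum_single A]
  simp only [map_sum]
  refine Finset.sum_congr rfl fun i _ => Finset.sum_congr rfl fun j _ => ?_
  rw [← smul_eq_mul, ← map_smul, smul_single, smul_eq_mul, mul_one]

variable {Ω 𝕜 : Type*} [MeasurableSpace Ω] {μ : Measure Ω} [RCLike 𝕜]

lemma LinearMap.integrable_comp_matrix (F : Matrix m n 𝕜 →ₗ[𝕜] 𝕜) {X : Ω → Matrix m n 𝕜}
    (hX : ∀ i j, Integrable (fun ω => X ω i j) μ) : Integrable (fun ω => F (X ω)) μ :=
  (integrable_finsetSum _ fun i _ => integrable_finsetSum _ fun j _ => (hX i j).mul_const _).congr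
    (ae_of_all _ fun ω => (F.apply_eq_sum_entry_mul (X ω)).symm)

lemma LinearMap.integral_comp_matrix (F : Matrix m n 𝕜 →ₗ[𝕜] 𝕜) {X : Ω → Matrix m n 𝕜}
    (hX : ∀ i j, Integrable (fun ω => X ω i j) μ) {M : Matrix m n 𝕜}
    (hM : ∀ i j, ∫ ω, X ω i j ∂μ = M i j) : ∫ ω, F (X ω) ∂μ = F M := by
  rw [integral_congr_ae (ae_of_all _ fun ω => F.apply_eq_sum_entry_mul (X ω)),
    F.apply_eq_sum_entry_mul M,
    integral_finsetSum _ fun i _ => integrable_finsetSum _ fun j _ => (hX i j).mul_const _]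
  refine Finset.sum_congr rfl fun i _ => ?_
  rw [integral_finsetSum _ fun j _ => (hX i j).mul_const _]
  simp only [integral_mul_const, hM]

end RandomMatrix

section Hadamard

variable {Ω ι : Type*}

lemma vecMulVec_mul_star_apply (v x : ι → ℂ) (i j : ι) :
    vecMulVec (v * x) (star (v * x)) i j = v i * conj (v j) * (x i * conj (x j)) := by
  simp only [vecMulVec_apply, Pi.mul_apply, Pi.star_apply, star_mul', RCLike.star_def]
  ring

variable [MeasurableSpace Ω] {μ : Measure Ω}

lemma integrable_vecMulVec_mul_star (v : ι → ℂ) {x : Ω → ι → ℂ}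
    (hx : ∀ i j, Integrable (fun ω => x ω i * conj (x ω j)) μ) (i j : ι) :
    Integrable (fun ω => vecMulVec (v * x ω) (star (v * x ω)) i j) μ := by
  simpa only [vecMulVec_mul_star_apply] using (hx i j).const_mul _

lemma integral_vecMulVec_mul_star [Fintype ι] [DecidableEq ι] (v : ι → ℂ) {x : Ω → ι → ℂ}
    {Z : Matrix ι ι ℂ} (hZ : ∀ i j, ∫ ω, x ω i * conj (x ω j) ∂μ = Z i j) (i j : ι) :
    ∫ ω, vecMulVec (v * x ω) (star (v * x ω)) i j ∂μ
      = (diagonal v * Z * diagonal (star v)) i j := by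
  simp only [vecMulVec_mul_star_apply, integral_const_mul, hZ, mul_diagonal, diagonal_mul,
    Pi.star_apply, RCLike.star_def]
  ring

end Hadamard

section HarvestedPower

variable {ι κ ι' : Type*} [Fintype ι] [Fintype κ] [Fintype ι']

-- the bracket of the theorem, as a linear function of `A = (v ⊙ ṽ)(v ⊙ ṽ)ᴴ`
def harvestedPower (G : Matrix ι κ ℂ) (c : ι' → ℂ) (w : ι' → κ → ℂ) (W : Matrix κ κ ℂ) :
    Matrix ι ι ℂ →ₗ[ℂ] ℂ where
  toFun A := ∑ k, c k * (star (w k) ⬝ᵥ (Gᴴ * A * G) *ᵥ w k) + trace (Gᴴ * A * G * W)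
  map_add' A B := by
    simp only [Matrix.mul_add, Matrix.add_mul, add_mulVec, dotProduct_add, mul_add,
      Finset.sum_add_distrib, trace_add]
    ring
  map_smul' r A := by
    simp only [Matrix.mul_smul, Matrix.smul_mul, smul_mulVec, dotProduct_smul, trace_smul,
      smul_eq_mul, Finset.mul_sum, RingHom.id_apply, mul_add, mul_left_comm r]

lemma star_dotProduct_conjTranspose_mul_mul_mulVec (G : Matrix ι κ ℂ) (B : Matrix ι ι ℂ)
    (w : κ → ℂ) : star w ⬝ᵥ (Gᴴ * B * G) *ᵥ w = star (G *ᵥ w) ⬝ᵥ B *ᵥ (G *ᵥ w) := by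
  rw [← mulVec_mulVec, ← mulVec_mulVec, dotProduct_mulVec, ← star_mulVec]

lemma ofReal_norm_sq_star_dotProduct_mulVec (G : Matrix ι κ ℂ) (u : ι → ℂ) (w : κ → ℂ) :
    ((‖star u ⬝ᵥ G *ᵥ w‖ ^ 2 : ℝ) : ℂ) = star w ⬝ᵥ (Gᴴ * vecMulVec u (star u) * G) *ᵥ w := by
  rw [star_dotProduct_conjTranspose_mul_mul_mulVec, vecMulVec_mulVec, op_smul_eq_smul,
    dotProduct_smul, star_dotProduct, smul_eq_mul, Complex.sq_norm, mul_comm,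
    Complex.star_def, Complex.normSq_conj, Complex.mul_conj]

end HarvestedPower

theorem expected_harvested_energy_general {Ω : Type*} [MeasurableSpace Ω]
    {μ : Measure Ω} [IsProbabilityMeasure μ]
    (N M K L : ℕ)
    (θ : Fin L → Fin N → Ω → ℝ) (hθ : ∀ l n, Measurable (θ l n))
    (hindep : iIndepFun
      (fun p : Fin L × Fin N => θ p.1 p.2) μ)
    (hlaw : ∀ l n, Measure.map (θ l n) μ
      = ENNReal.ofReal (1 / π) • volume.restrict (Set.Icc (-(π / 2)) (π / 2)))
    (vt : Fin L → Ω → Fin (N + 1) → ℂ)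
    (hvt : ∀ l ω (n : Fin (N + 1)), vt l ω n
      = if h : (n : ℕ) < N then Complex.exp (-(Complex.I * (θ l ⟨n, h⟩ ω : ℂ))) else 1)
    (G : Matrix (Fin (N + 1)) (Fin M) ℂ)
    (v : Fin L → Fin (N + 1) → ℂ) (τ : Fin L → ℝ) (a : Fin K → Fin L → ℝ)
    (w : Fin K → Fin L → Fin M → ℂ)
    (WE : Fin L → Matrix (Fin M) (Fin M) ℂ)
    (Z : Matrix (Fin (N + 1)) (Fin (N + 1)) ℂ)
    (hZ : ∀ m n, Z m n = if m = n then 1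
      else if (m : ℕ) < N ∧ (n : ℕ) < N then ((4 / π ^ 2 : ℝ) : ℂ) else ((2 / π : ℝ) : ℂ))
    (Y : Fin L → Matrix (Fin M) (Fin M) ℂ)
    (hY : ∀ l, Y l = Gᴴ * diagonal (v l) * Z * diagonal (star (v l)) * G) :
    (∫ ω, ∑ l, (τ l : ℂ) *
        ((∑ k, (a k l : ℂ) * ((‖star (v l * vt l ω) ⬝ᵥ G.mulVec (w k l)‖ ^ 2 : ℝ) : ℂ))
          + Matrix.trace (Gᴴ * vecMulVec (v l * vt l ω) (star (v l * vt l ω)) * G * WE l)) ∂μ)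
      = ∑ l, (τ l : ℂ) *
          ((∑ k, (a k l : ℂ) * (star (w k l) ⬝ᵥ (Y l).mulVec (w k l)))
            + Matrix.trace (Y l * WE l)) := by
  obtain rfl : vt = fun l ω => phaseVector (θ l · ω) :=
    funext fun l => funext fun ω => funext (hvt l ω)
  set F := fun l => harvestedPower G (fun k => (a k l : ℂ)) (fun k => w k l) (WE l)
  have hsecond : ∀ l m n,
      ∫ ω, phaseVector (θ l · ω) m * conj (phaseVector (θ l · ω) n) ∂μ = Z m n :=
    fun l m n => (integral_phaseVector_mul_conj (hθ l)
      (fun i j hij => hindep.indepFun (i := (l, i)) (j := (l, j)) (by simpa using hij))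
      (hlaw l) m n).trans (hZ m n).symm
  have hint : ∀ l i j, Integrable (fun ω => vecMulVec (v l * phaseVector (θ l · ω))
      (star (v l * phaseVector (θ l · ω))) i j) μ :=
    fun l => integrable_vecMulVec_mul_star (v l) (integrable_phaseVector_mul_conj (hθ l))
  have hY' : ∀ l, Y l = Gᴴ * (diagonal (v l) * Z * diagonal (star (v l))) * G := fun l => by
    simp only [hY, Matrix.mul_assoc]
  simp only [ofReal_norm_sq_star_dotProduct_mulVec, hY']
  change ∫ ω, ∑ l, (τ l : ℂ) * F l (vecMulVec (v l * phaseVector (θ l · ω))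
      (star (v l * phaseVector (θ l · ω)))) ∂μ
    = ∑ l, (τ l : ℂ) * F l (diagonal (v l) * Z * diagonal (star (v l)))
  rw [integral_finsetSum _ fun l _ => ((F l).integrable_comp_matrix (hint l)).const_mul _]
  refine Finset.sum_congr rfl fun l _ => ?_
  rw [integral_const_mul, (F l).integral_comp_matrix (hint l)
    (integral_vecMulVec_mul_star (v l) (hsecond l))]

/-- Theorem 1, equation (5): the expected harvested-energy expression.
For i.i.d. uniform phase errors `θ_{ℓ,n}` on `[-π/2, π/2]` and the corresponding
random vectors `ṽ_ℓ`, the expectation of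
`Σ_ℓ τ_ℓ (Σ_k a_{k,ℓ} |(v_ℓ ⊙ ṽ_ℓ)ᴴ G w_{k,ℓ}|² + tr(Gᴴ (v_ℓ⊙ṽ_ℓ)(v_ℓ⊙ṽ_ℓ)ᴴ G W_{E,ℓ}))`
equals `Σ_ℓ τ_ℓ (Σ_k a_{k,ℓ} w_{k,ℓ}ᴴ Y_ℓ w_{k,ℓ} + tr(Y_ℓ W_{E,ℓ}))`, where
`Y_ℓ = Gᴴ diag(v_ℓ) Z diag(conj v_ℓ) G`. -/
theorem expected_harvested_energy {Ω : Type*} [MeasurableSpace Ω]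
    {μ : Measure Ω} [IsProbabilityMeasure μ]
    (N M K L : ℕ) (hN : 1 ≤ N) (hM : 1 ≤ M) (hL : 1 ≤ L)
    (θ : Fin L → Fin N → Ω → ℝ) (hθ : ∀ l n, Measurable (θ l n))
    (hindep : iIndepFun
      (fun p : Fin L × Fin N => θ p.1 p.2) μ)
    (hlaw : ∀ l n, Measure.map (θ l n) μ
      = ENNReal.ofReal (1 / π) • volume.restrict (Set.Icc (-(π / 2)) (π / 2)))
    (vt : Fin L → Ω → Fin (N + 1) → ℂ)
    (hvt : ∀ l ω (n : Fin (N + 1)), vt l ω n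
      = if h : (n : ℕ) < N then Complex.exp (-(Complex.I * (θ l ⟨n, h⟩ ω : ℂ))) else 1)
    (G : Matrix (Fin (N + 1)) (Fin M) ℂ)
    (v : Fin L → Fin (N + 1) → ℂ) (τ : Fin L → ℝ) (a : Fin K → Fin L → ℝ)
    (w : Fin K → Fin L → Fin M → ℂ)
    (WE : Fin L → Matrix (Fin M) (Fin M) ℂ) (hWE : ∀ l, (WE l).IsHermitian)
    (Z : Matrix (Fin (N + 1)) (Fin (N + 1)) ℂ)
    (hZ : ∀ m n, Z m n = if m = n then 1
      else if (m : ℕ) < N ∧ (n : ℕ) < N then ((4 / π ^ 2 : ℝ) : ℂ) else ((2 / π : ℝ) : ℂ))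
    (Y : Fin L → Matrix (Fin M) (Fin M) ℂ)
    (hY : ∀ l, Y l = Gᴴ * diagonal (v l) * Z * diagonal (star (v l)) * G) :
    (∫ ω, ∑ l, (τ l : ℂ) *
        ((∑ k, (a k l : ℂ) * ((‖star (v l * vt l ω) ⬝ᵥ G.mulVec (w k l)‖ ^ 2 : ℝ) : ℂ))
          + Matrix.trace (Gᴴ * vecMulVec (v l * vt l ω) (star (v l * vt l ω)) * G * WE l)) ∂μ)
      = ∑ l, (τ l : ℂ) *
          ((∑ k, (a k l : ℂ) * (star (w k l) ⬝ᵥ (Y l).mulVec (w k l)))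
            + Matrix.trace (Y l * WE l)) :=
  expected_harvested_energy_general N M K L θ hθ hindep hlaw vt hvt G v τ a w WE Z hZ Y hY
end

section
/- Let c > 0, x ≥ 0, x₀ ≥ 0, t > 0, t₀ > 0 be real numbers and set Υ = x₀/t₀ + c. Then t · log(x/t + c) ≤ t₀ · log(Υ) + (x − x₀)/Υ + ( log(Υ) − (Υ − c)/Υ ) · (t − t₀). -/
/-- The first-order Taylor expansion of `(x, t) ↦ t·log(x/t + c)` at `(x₀, t₀)`
is a global upper bound (the key SCA surrogate inequality (30)). -/
theorem perspective_log_taylor_upper_bound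
    (c x x₀ t t₀ : ℝ) (hc : 0 < c) (hx : 0 ≤ x) (hx₀ : 0 ≤ x₀)
    (ht : 0 < t) (ht₀ : 0 < t₀) :
    t * Real.log (x / t + c)
      ≤ t₀ * Real.log (x₀ / t₀ + c) + (x - x₀) / (x₀ / t₀ + c)
        + (Real.log (x₀ / t₀ + c) - ((x₀ / t₀ + c) - c) / (x₀ / t₀ + c)) * (t - t₀) := by
  set Υ : ℝ := x₀ / t₀ + c with hΥ
  have hΥpos : 0 < Υ := by positivity
  have hypos : 0 < x / t + c := by positivity
  have hlog : Real.log (x / t + c) ≤ Real.log Υ + (x / t + c - Υ) / Υ := by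
    have h := Real.log_le_sub_one_of_pos (show 0 < (x / t + c) / Υ by positivity)
    rw [Real.log_div (ne_of_gt hypos) (ne_of_gt hΥpos)] at h
    have : (x / t + c) / Υ - 1 = (x / t + c - Υ) / Υ := by field_simp
    linarith [this ▸ h]
  have key : t * Real.log (x / t + c) ≤ t * Real.log Υ + t * ((x / t + c - Υ) / Υ) := by
    nlinarith [mul_le_mul_of_nonneg_left hlog ht.le]
  have hx₀eq : x₀ = t₀ * (Υ - c) := by
    rw [hΥ]; field_simp; ring
  clear_value Υ
  have heq : t * Real.log Υ + t * ((x / t + c - Υ) / Υ)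
      = t₀ * Real.log Υ + (x - x₀) / Υ
        + (Real.log Υ - (Υ - c) / Υ) * (t - t₀) := by
    rw [hx₀eq]
    field_simp
    ring
  linarith [heq ▸ key]
end
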